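/- arXiv:1401.1397 — 7 statements merged into one kernel-verified Lean document; each statement's English description precedes it below -/
import Mathlib

section
/- With the setup of observed conditional frequencies c_{ij} = g_{ij}/h_{ij} (reduced fractions, column sums ∑_i c_{ij} = 1) and m_j = lcm_i(h_{ij}): there exists a nonnegative integer table {s_{ij}} with all column sums positive, conditional frequencies equal to c_{ij}, and total sum N, if and only if the linear Diophantine equation ∑_{j=1}^{J} m_j·x_j = N has a solution in positive integers x_1, …, x_J. -/
/-! A column with conditional frequencies `g i / h i` (in lowest terms) and column sum `T` exists
exactly when every `h i`, hence `m = lcm_i h i`, divides `T`: the entry `s i = g i * (T / h i)`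
is forced. So the possible column sums are the positive multiples `m_j x_j`, and a table of
total `N` is the same as a positive solution of `∑ m_j x_j = N`. -/

open Finset

theorem dvd_of_natCast_eq_div_mul {g h s T : ℕ} (hcop : g.Coprime h) (hh : h ≠ 0)
    (hs : (s : ℚ) = g / h * T) : h ∣ T := by
  have hsh : s * h = g * T := by
    have hh' : (h : ℚ) ≠ 0 := by exact_mod_cast hh
    exact_mod_cast (by rw [hs]; field_simp : (s : ℚ) * h = g * T)
  exact hcop.symm.dvd_of_dvd_mul_left ⟨s, by rw [← hsh, mul_comm]⟩

theorem natCast_mul_div_eq_div_mul {g h T : ℕ} (hd : h ∣ T) :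
    ((g * (T / h) : ℕ) : ℚ) = g / h * T := by
  push_cast [Nat.cast_div_charZero hd]
  ring

section Column

variable {ι : Type*} [Fintype ι] {g h : ι → ℕ} {c : ι → ℚ}

theorem lcm_dvd_sum_of_natCast_eq_mul_sum (hcop : ∀ i, (g i).Coprime (h i))
    (hpos : ∀ i, 0 < h i) (hc : ∀ i, c i = g i / h i) (s : ι → ℕ)
    (hs : ∀ i, (s i : ℚ) = c i * (∑ i', s i' : ℕ)) : univ.lcm h ∣ ∑ i, s i :=
  Finset.lcm_dvd fun i _ =>
    dvd_of_natCast_eq_div_mul (hcop i) (hpos i).ne' (by rw [hs i, hc i])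

theorem exists_sum_eq_natCast_eq_mul_of_lcm_dvd (hc : ∀ i, c i = g i / h i)
    (hsum : ∑ i, c i = 1) {T : ℕ} (hT : univ.lcm h ∣ T) :
    ∃ s : ι → ℕ, ∑ i, s i = T ∧ ∀ i, (s i : ℚ) = c i * T := by
  have hfreq : ∀ i, ((g i * (T / h i) : ℕ) : ℚ) = c i * T := fun i => by
    rw [hc i]
    exact natCast_mul_div_eq_div_mul ((Finset.dvd_lcm (mem_univ i)).trans hT)
  refine ⟨fun i => g i * (T / h i), ?_, hfreq⟩
  have : ((∑ i, g i * (T / h i) : ℕ) : ℚ) = T := by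
    rw [Nat.cast_sum, Finset.sum_congr rfl fun i _ => hfreq i, ← Finset.sum_mul, hsum, one_mul]
  exact_mod_cast this

end Column

theorem exists_pos_dvd_sum_eq_iff {ι : Type*} [Fintype ι] {m : ι → ℕ} (hm : ∀ j, 0 < m j)
    (N : ℕ) :
    (∃ T : ι → ℕ, (∀ j, 0 < T j) ∧ (∀ j, m j ∣ T j) ∧ ∑ j, T j = N) ↔
      ∃ x : ι → ℕ, (∀ j, 0 < x j) ∧ ∑ j, m j * x j = N := by
  constructor
  · rintro ⟨T, hTpos, hTdvd, hTsum⟩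
    refine ⟨fun j => T j / m j, fun j => Nat.div_pos (Nat.le_of_dvd (hTpos j) (hTdvd j)) (hm j),
      ?_⟩
    simpa only [Nat.mul_div_cancel' (hTdvd _)] using hTsum
  · rintro ⟨x, hxpos, hxsum⟩
    exact ⟨fun j => m j * x j, fun j => Nat.mul_pos (hm j) (hxpos j),
      fun j => dvd_mul_right _ _, hxsum⟩

theorem stmt_4_general (I J N : ℕ)
    (g h : Fin I → Fin J → ℕ)
    (hcop : ∀ i j, Nat.Coprime (g i j) (h i j))
    (hpos : ∀ i j, 0 < h i j)
    (c : Fin I → Fin J → ℚ) (hc : ∀ i j, c i j = (g i j : ℚ) / (h i j : ℚ))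
    (hsum1 : ∀ j, ∑ i, c i j = 1)
    (m : Fin J → ℕ) (hm : ∀ j, m j = Finset.univ.lcm (fun i => h i j)) :
    (∃ s : Fin I → Fin J → ℕ,
        (∀ j, 0 < ∑ i, s i j) ∧
        (∑ j, ∑ i, s i j) = N ∧
        (∀ i j, (s i j : ℚ) = c i j * ((∑ i', s i' j : ℕ) : ℚ)))
    ↔ ∃ x : Fin J → ℕ, (∀ j, 0 < x j) ∧ ∑ j, m j * x j = N := by
  have hmpos : ∀ j, 0 < m j := fun j => by
    rw [hm j, Nat.pos_iff_ne_zero, Finset.lcm_ne_zero_iff]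
    exact fun i _ => (hpos i j).ne'
  rw [← exists_pos_dvd_sum_eq_iff hmpos]
  constructor
  · rintro ⟨s, hspos, hsN, hsc⟩
    exact ⟨fun j => ∑ i, s i j, hspos, fun j => hm j ▸ lcm_dvd_sum_of_natCast_eq_mul_sum
      (hcop · j) (hpos · j) (hc · j) (s · j) (hsc · j), hsN⟩
  · rintro ⟨T, hTpos, hTdvd, hTsum⟩
    choose s hs_sum hs_freq using fun j =>
      exists_sum_eq_natCast_eq_mul_of_lcm_dvd (hc · j) (hsum1 j) (hm j ▸ hTdvd j)
    refine ⟨fun i j => s j i, fun j => (hs_sum j).symm ▸ hTpos j, ?_, fun i j => ?_⟩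
    · simpa only [hs_sum] using hTsum
    · simpa only [hs_sum] using hs_freq j i

theorem stmt_4 (I J N : ℕ) (hI : 0 < I) (hJ : 0 < J) (hN : 0 < N)
    (g h : Fin I → Fin J → ℕ)
    (hcop : ∀ i j, Nat.Coprime (g i j) (h i j))
    (hpos : ∀ i j, 0 < h i j)
    (c : Fin I → Fin J → ℚ) (hc : ∀ i j, c i j = (g i j : ℚ) / (h i j : ℚ))
    (hsum1 : ∀ j, ∑ i, c i j = 1)
    (m : Fin J → ℕ) (hm : ∀ j, m j = Finset.univ.lcm (fun i => h i j)) :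
    (∃ s : Fin I → Fin J → ℕ,
        (∀ j, 0 < ∑ i, s i j) ∧
        (∑ j, ∑ i, s i j) = N ∧
        (∀ i j, (s i j : ℚ) = c i j * ((∑ i', s i' j : ℕ) : ℚ)))
    ↔ ∃ x : Fin J → ℕ, (∀ j, 0 < x j) ∧ ∑ j, m j * x j = N :=
  stmt_4_general I J N g h hcop hpos c hc hsum1 m hm
end

section
/- In the setting of Theorem relating conditionals to marginals: the map sending a positive integer solution (x_1, …, x_J) of ∑_j m_j·x_j = N to the marginal vector (s_{+1}, …, s_{+J}) = (m_1·x_1, …, m_J·x_J) is a bijection between the set of positive integer solutions of the Diophantine equation and the set of possible column-sum (marginal) vectors of nonnegative integer tables with total N, positive column sums, and conditional frequencies c_{ij}. -/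
/-!
A column with conditional frequencies `g i / h i` (in lowest terms) and column sum `t` must have
entries `g i * t / h i`; these are integers exactly when every `h i` divides `t`, i.e. when
`m = lcm h` divides `t`. So the possible marginal vectors are the positive vectors with total `N`
whose `j`-th entry is a multiple of `m j`, and dividing by `m j` identifies them with the positive
solutions of `∑ m j * x j = N`.
-/

open Finset

theorem Nat.dvd_of_cast_eq_div_mul {a b k n : ℕ} (hab : a.Coprime b) (hb : 0 < b)
    (hk : (k : ℚ) = a / b * n) : b ∣ n := by
  have hb' : (b : ℚ) ≠ 0 := by exact_mod_cast hb.ne'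
  have hbk : b * k = a * n := by
    exact_mod_cast (by rw [hk]; field_simp : (b : ℚ) * k = a * n)
  exact hab.symm.dvd_of_dvd_mul_left ⟨k, hbk.symm⟩

theorem Finset.lcm_pos_of_forall_pos {ι : Type*} {s : Finset ι} {f : ι → ℕ}
    (hf : ∀ i ∈ s, 0 < f i) : 0 < s.lcm f := by
  refine Nat.pos_of_ne_zero fun h0 => ?_
  obtain ⟨i, hi, hfi⟩ := Finset.lcm_eq_zero_iff.1 h0
  exact (hf i hi).ne' hfi

section Column

variable {ι : Type*} [Fintype ι] {g h : ι → ℕ} {c : ι → ℚ}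

theorem exists_column_iff_lcm_dvd (hcop : ∀ i, (g i).Coprime (h i)) (hpos : ∀ i, 0 < h i)
    (hc : ∀ i, c i = g i / h i) (hsum1 : ∑ i, c i = 1) (t : ℕ) :
    (∃ col : ι → ℕ, ∑ i, col i = t ∧ ∀ i, (col i : ℚ) = c i * t) ↔ univ.lcm h ∣ t := by
  constructor
  · rintro ⟨col, -, hcol⟩
    exact Finset.lcm_dvd fun i _ =>
      Nat.dvd_of_cast_eq_div_mul (hcop i) (hpos i) ((hcol i).trans (by rw [hc]))
  · intro hdvd
    have hcast : ∀ i, ((t / h i * g i : ℕ) : ℚ) = c i * t := fun i => by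
      have hhi : (h i : ℚ) ≠ 0 := by exact_mod_cast (hpos i).ne'
      rw [Nat.cast_mul, Nat.cast_div ((Finset.dvd_lcm (mem_univ i)).trans hdvd) hhi, hc]
      ring
    refine ⟨fun i => t / h i * g i, ?_, hcast⟩
    exact_mod_cast (by simp only [Nat.cast_sum, hcast, ← Finset.sum_mul, hsum1, one_mul] :
      ((∑ i, t / h i * g i : ℕ) : ℚ) = t)

end Column

theorem possibleMarginals_eq {ι κ : Type*} [Fintype ι] [Fintype κ] (N : ℕ) {g h : ι → κ → ℕ}
    (hcop : ∀ i j, (g i j).Coprime (h i j)) (hpos : ∀ i j, 0 < h i j) {c : ι → κ → ℚ}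
    (hc : ∀ i j, c i j = g i j / h i j) (hsum1 : ∀ j, ∑ i, c i j = 1) :
    {sm : κ → ℕ | ∃ s : ι → κ → ℕ,
        (∀ j, 0 < ∑ i, s i j) ∧
        (∑ j, ∑ i, s i j) = N ∧
        (∀ i j, (s i j : ℚ) = c i j * ((∑ i', s i' j : ℕ) : ℚ)) ∧
        (∀ j, sm j = ∑ i, s i j)} =
      {y | (∀ j, 0 < y j) ∧ ∑ j, y j = N ∧ ∀ j, univ.lcm (h · j) ∣ y j} := by
  have hcol := fun j => exists_column_iff_lcm_dvd (fun i => hcop i j) (fun i => hpos i j)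
    (fun i => hc i j) (hsum1 j)
  ext sm
  constructor
  · rintro ⟨s, hspos, hstotal, hscond, hsm⟩
    obtain rfl : sm = fun j => ∑ i, s i j := funext hsm
    exact ⟨hspos, hstotal, fun j => (hcol j _).1 ⟨(s · j), rfl, fun i => hscond i j⟩⟩
  · rintro ⟨hsmpos, hsmtotal, hdvd⟩
    choose col hcolsum hcolcond using fun j => (hcol j (sm j)).2 (hdvd j)
    refine ⟨fun i j => col j i, fun j => ?_, ?_, fun i j => ?_, fun j => (hcolsum j).symm⟩
    · simpa only [hcolsum] using hsmpos j
    · simpa only [hcolsum] using hsmtotal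
    · simpa only [hcolsum] using hcolcond j i

theorem bijOn_mul_positiveSolutions_multiples {κ : Type*} [Fintype κ] (N : ℕ) {m : κ → ℕ}
    (hm : ∀ j, 0 < m j) :
    Set.BijOn (fun (x : κ → ℕ) (j : κ) => m j * x j)
      {x | (∀ j, 0 < x j) ∧ ∑ j, m j * x j = N}
      {y | (∀ j, 0 < y j) ∧ ∑ j, y j = N ∧ ∀ j, m j ∣ y j} := by
  refine ⟨?_, ?_, ?_⟩
  · rintro x ⟨hxpos, hxsum⟩
    exact ⟨fun j => Nat.mul_pos (hm j) (hxpos j), hxsum, fun j => dvd_mul_right _ _⟩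
  · intro x _ x' _ hxx'
    funext j
    exact Nat.eq_of_mul_eq_mul_left (hm j) (congrFun hxx' j)
  · rintro y ⟨hypos, hysum, hdvd⟩
    have hy : (fun j => m j * (y j / m j)) = y := funext fun j => Nat.mul_div_cancel' (hdvd j)
    refine ⟨fun j => y j / m j, ⟨fun j => ?_, ?_⟩, hy⟩
    · exact Nat.div_pos (Nat.le_of_dvd (hypos j) (hdvd j)) (hm j)
    · simpa only [hy] using hysum

theorem stmt_5_general (I J N : ℕ)
    (g h : Fin I → Fin J → ℕ)
    (hcop : ∀ i j, Nat.Coprime (g i j) (h i j))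
    (hpos : ∀ i j, 0 < h i j)
    (c : Fin I → Fin J → ℚ) (hc : ∀ i j, c i j = (g i j : ℚ) / (h i j : ℚ))
    (hsum1 : ∀ j, ∑ i, c i j = 1)
    (m : Fin J → ℕ) (hm : ∀ j, m j = Finset.univ.lcm (fun i => h i j)) :
    Set.BijOn (fun (x : Fin J → ℕ) (j : Fin J) => m j * x j)
      {x : Fin J → ℕ | (∀ j, 0 < x j) ∧ ∑ j, m j * x j = N}
      {sm : Fin J → ℕ | ∃ s : Fin I → Fin J → ℕ,
          (∀ j, 0 < ∑ i, s i j) ∧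
          (∑ j, ∑ i, s i j) = N ∧
          (∀ i j, (s i j : ℚ) = c i j * ((∑ i', s i' j : ℕ) : ℚ)) ∧
          (∀ j, sm j = ∑ i, s i j)} := by
  obtain rfl : m = fun j => univ.lcm (h · j) := funext hm
  rw [possibleMarginals_eq N hcop hpos hc hsum1]
  exact bijOn_mul_positiveSolutions_multiples N
    fun j => Finset.lcm_pos_of_forall_pos fun i _ => hpos i j

theorem stmt_5 (I J N : ℕ) (hI : 0 < I) (hJ : 0 < J) (hN : 0 < N)
    (g h : Fin I → Fin J → ℕ)
    (hcop : ∀ i j, Nat.Coprime (g i j) (h i j))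
    (hpos : ∀ i j, 0 < h i j)
    (c : Fin I → Fin J → ℚ) (hc : ∀ i j, c i j = (g i j : ℚ) / (h i j : ℚ))
    (hsum1 : ∀ j, ∑ i, c i j = 1)
    (m : Fin J → ℕ) (hm : ∀ j, m j = Finset.univ.lcm (fun i => h i j)) :
    Set.BijOn (fun (x : Fin J → ℕ) (j : Fin J) => m j * x j)
      {x : Fin J → ℕ | (∀ j, 0 < x j) ∧ ∑ j, m j * x j = N}
      {sm : Fin J → ℕ | ∃ s : Fin I → Fin J → ℕ,
          (∀ j, 0 < ∑ i, s i j) ∧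
          (∑ j, ∑ i, s i j) = N ∧
          (∀ i j, (s i j : ℚ) = c i j * ((∑ i', s i' j : ℕ) : ℚ)) ∧
          (∀ j, sm j = ∑ i, s i j)} :=
  stmt_5_general I J N g h hcop hpos c hc hsum1 m hm
end

section
/- Suppose the fiber F_{A|B} of tables decomposes as a disjoint union of the fibers F_{AB}(p_1), …, F_{AB}(p_m) over the m distinct possible marginals. Then |F_{A|B}| = ∑_{i=1}^m |F_{AB}(p_i)|, and in particular |F_{A|B}| = ∑_{i=1}^m ∏_{a,b} C(s^{(i)}_{ab} + K − 1, K − 1), where s^{(i)} is the i-th possible [AB] margin. -/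
/-! Stars and bars: the counts `t a b ·` over a cell `(a, b)` with prescribed `[AB]` entry `n`
form a multiset of size `n` on `Fin K`, so the cells of a fiber `F_{AB}(p)` are filled
independently, in `C(n + K - 1, K - 1)` ways each. Since `F_{A|B}` is the disjoint union of finitely
many such fibers, its cardinality is the sum of theirs. -/

open Finset Function

section StarsAndBars

variable {γ : Type*} [Fintype γ]

instance finite_subtype_sum_eq (n : ℕ) : Finite {f : γ → ℕ // ∑ k, f k = n} := by
  classical exact Finite.of_equiv _ (Sym.equivNatSumOfFintype γ n)

theorem card_subtype_sum_eq [Nonempty γ] (n : ℕ) :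
    Nat.card {f : γ → ℕ // ∑ k, f k = n} =
      (n + Fintype.card γ - 1).choose (Fintype.card γ - 1) := by
  classical
  rw [← Nat.card_congr (Sym.equivNatSumOfFintype γ n), Nat.card_eq_fintype_card,
    Sym.card_sym_eq_choose]
  have := Fintype.card_pos (α := γ)
  rw [add_comm n]
  exact Nat.choose_symm_of_eq_add (by omega)

end StarsAndBars

section MarginFiber

variable {α β : Type*} (γ : Type*) [Fintype γ]

def marginFiber (s : α → β → ℕ) : Set (α → β → γ → ℕ) :=
  {t | ∀ a b, ∑ k, t a b k = s a b}

def marginFiberEquiv (s : α → β → ℕ) :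
    marginFiber γ s ≃ ∀ a b, {f : γ → ℕ // ∑ k, f k = s a b} where
  toFun t a b := ⟨t.1 a b, t.2 a b⟩
  invFun g := ⟨fun a b => (g a b).1, fun a b => (g a b).2⟩

variable {γ}

instance [Finite α] [Finite β] (s : α → β → ℕ) : Finite (marginFiber γ s) :=
  Finite.of_equiv _ (marginFiberEquiv γ s).symm

theorem card_marginFiber [Fintype α] [Fintype β] [Nonempty γ] (s : α → β → ℕ) :
    Nat.card (marginFiber γ s) =
      ∏ a, ∏ b, (s a b + Fintype.card γ - 1).choose (Fintype.card γ - 1) := by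
  simp only [Nat.card_congr (marginFiberEquiv γ s), Nat.card_pi, card_subtype_sum_eq]

end MarginFiber

theorem Nat.card_iUnion_of_pairwise_disjoint {ι α : Type*} [Fintype ι] {s : ι → Set α}
    [∀ i, Finite (s i)] (h : Pairwise (Disjoint on s)) :
    Nat.card (⋃ i, s i) = ∑ i, Nat.card (s i) := by
  rw [Nat.card_congr (Set.unionEqSigmaOfDisjoint h), Nat.card_sigma]

theorem stmt_8 (I J K m : ℕ) (hK : 0 < K)
    (F : Set (Fin I → Fin J → Fin K → ℕ))
    (s : Fin m → Fin I → Fin J → ℕ)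
    (P : Fin m → Set (Fin I → Fin J → Fin K → ℕ))
    (hP : ∀ i, P i = {t | ∀ a b, ∑ k, t a b k = s i a b})
    (hunion : F = ⋃ i, P i)
    (hdisj : ∀ i i', i ≠ i' → Disjoint (P i) (P i')) :
    Nat.card F = ∑ i, Nat.card (P i) ∧
    Nat.card F = ∑ i, ∏ a, ∏ b, (s i a b + K - 1).choose (K - 1) := by
  obtain rfl : P = fun i => marginFiber (Fin K) (s i) := funext hP
  have : Nonempty (Fin K) := ⟨⟨0, hK⟩⟩
  have hcard : Nat.card F = ∑ i, Nat.card (marginFiber (Fin K) (s i)) :=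
    hunion ▸ Nat.card_iUnion_of_pairwise_disjoint fun i i' h => hdisj i i' h
  refine ⟨hcard, hcard.trans (sum_congr rfl fun i _ => ?_)⟩
  simpa using card_marginFiber (γ := Fin K) (s i)
end

section
/- The set F_{A|B} of nonnegative integer I×J×K arrays with total sum N, positive column (B) margins, and conditional frequencies c_{ij}, is the disjoint union over all positive integer solutions x of ∑_j m_j x_j = N of the sets F_{AB}(x) of arrays whose [AB]-margin equals (m_j x_j c_{ij})_{ij}. In particular, two arrays in F_{A|B} with different B-margins lie in different pieces of the union. -/
/-!
If `s_{ij} = c_{ij} s_{+j}` with `c_{ij} = g_{ij}/h_{ij}` in lowest terms, then `h_{ij} ∣ s_{+j}`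
for every `i`, so `m_j ∣ s_{+j}` and `x_j := s_{+j} / m_j` is a positive solution of
`∑_j m_j x_j = N` with `t ∈ F_{AB}(x)`. Conversely, summing `s_{ij} = m_j x_j c_{ij}` over `i`
and using `∑_i c_{ij} = 1` gives `s_{+j} = m_j x_j`; so `x` is determined by the B-margin of `t`,
which makes the union disjoint.
-/

open Finset

theorem Nat.dvd_of_cast_eq_div_mul_s9 {a b g h : ℕ} (hgh : g.Coprime h) (h0 : h ≠ 0)
    (hab : (a : ℚ) = g / h * b) : h ∣ b := by
  have hab' : a * h = g * b := by
    have : (a : ℚ) * h = g * b := by rw [hab]; field_simp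
    exact_mod_cast this
  exact hgh.symm.dvd_of_dvd_mul_left ⟨a, by rw [← hab', mul_comm]⟩

section Column

variable {ι : Type*} [Fintype ι]

theorem sum_eq_of_cast_eq_mul {c : ι → ℚ} (hc : ∑ i, c i = 1) {s : ι → ℕ} {M : ℕ}
    (hs : ∀ i, (s i : ℚ) = M * c i) : ∑ i, s i = M := by
  have : ((∑ i, s i : ℕ) : ℚ) = M := by
    rw [Nat.cast_sum, sum_congr rfl fun i _ => hs i, ← mul_sum, hc, mul_one]
  exact_mod_cast this

theorem exists_sum_eq_lcm_mul_of_cast_eq_div_mul_sum {g h s : ι → ℕ}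
    (hgh : ∀ i, (g i).Coprime (h i)) (h0 : ∀ i, h i ≠ 0)
    (hs : ∀ i, (s i : ℚ) = g i / h i * (∑ i', s i' : ℕ)) :
    ∃ x, ∑ i, s i = univ.lcm h * x ∧ ∀ i, (s i : ℚ) = univ.lcm h * x * (g i / h i) := by
  obtain ⟨x, hx⟩ : univ.lcm h ∣ ∑ i, s i :=
    lcm_dvd fun i _ => Nat.dvd_of_cast_eq_div_mul_s9 (hgh i) (h0 i) (hs i)
  refine ⟨x, hx, fun i => ?_⟩
  rw [hs i, hx]
  push_cast
  ring

end Column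

theorem stmt_9_general (I J K N : ℕ)
    (g h : Fin I → Fin J → ℕ)
    (hcop : ∀ i j, Nat.Coprime (g i j) (h i j))
    (hpos : ∀ i j, 0 < h i j)
    (c : Fin I → Fin J → ℚ) (hc : ∀ i j, c i j = (g i j : ℚ) / (h i j : ℚ))
    (hsum1 : ∀ j, ∑ i, c i j = 1)
    (m : Fin J → ℕ) (hm : ∀ j, m j = Finset.univ.lcm (fun i => h i j))
    (FAB : (Fin J → ℕ) → Set (Fin I → Fin J → Fin K → ℕ))
    (hFAB : ∀ x, FAB x = {t | ∀ i j, ((∑ k, t i j k : ℕ) : ℚ) = (m j : ℚ) * (x j : ℚ) * c i j})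
    (Sol : Set (Fin J → ℕ))
    (hSol : Sol = {x | (∀ j, 0 < x j) ∧ ∑ j, m j * x j = N}) :
    {t : Fin I → Fin J → Fin K → ℕ |
        (∑ i, ∑ j, ∑ k, t i j k) = N ∧
        (∀ j, 0 < ∑ i, ∑ k, t i j k) ∧
        (∀ i j, ((∑ k, t i j k : ℕ) : ℚ) = c i j * ((∑ i', ∑ k, t i' j k : ℕ) : ℚ))}
      = (⋃ x ∈ Sol, FAB x) ∧
    (∀ x ∈ Sol, ∀ x' ∈ Sol, x ≠ x' → Disjoint (FAB x) (FAB x')) := by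
  subst hSol
  have hmpos : ∀ j, 0 < m j := fun j => by
    rw [hm, Nat.pos_iff_ne_zero, Finset.lcm_ne_zero_iff]
    exact fun i _ => (hpos i j).ne'
  have hcol : ∀ x, ∀ t ∈ FAB x, ∀ j, ∑ i, ∑ k, t i j k = m j * x j := fun x t ht j => by
    rw [hFAB] at ht
    exact sum_eq_of_cast_eq_mul (hsum1 j) fun i => by rw [Nat.cast_mul]; exact ht i j
  refine ⟨Set.ext fun t => ⟨fun ⟨htot, hposj, hfreq⟩ => ?_, fun ht => ?_⟩, ?_⟩
  · choose x hxsum hxt using fun j => exists_sum_eq_lcm_mul_of_cast_eq_div_mul_sum (hcop · j)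
      (fun i => (hpos i j).ne') fun i => by rw [← hc]; exact hfreq i j
    simp only [← hm, ← hc] at hxsum hxt
    refine Set.mem_biUnion (x := x) ?_ (by rw [hFAB]; exact fun i j => hxt j i)
    refine ⟨fun j => Nat.pos_of_mul_pos_left (hxsum j ▸ hposj j), ?_⟩
    rw [← htot, sum_comm]
    exact sum_congr rfl fun j _ => (hxsum j).symm
  · obtain ⟨x, ⟨hxpos, hxN⟩, hxt⟩ := Set.mem_iUnion₂.mp ht
    have hxcol := hcol x t hxt
    rw [hFAB] at hxt
    refine ⟨?_, fun j => ?_, fun i j => ?_⟩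
    · rw [sum_comm, sum_congr rfl fun j _ => hxcol j, hxN]
    · rw [hxcol j]
      exact Nat.mul_pos (hmpos j) (hxpos j)
    · rw [hxt i j, hxcol j]
      push_cast
      ring
  · intro x _ x' _ hne
    refine Set.disjoint_left.mpr fun t ht ht' => hne (funext fun j => ?_)
    exact Nat.eq_of_mul_eq_mul_left (hmpos j)
      ((hcol x t ht j).symm.trans (hcol x' t ht' j))

theorem stmt_9 (I J K N : ℕ) (hI : 0 < I) (hJ : 0 < J) (hK : 0 < K) (hN : 0 < N)
    (g h : Fin I → Fin J → ℕ)
    (hcop : ∀ i j, Nat.Coprime (g i j) (h i j))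
    (hpos : ∀ i j, 0 < h i j)
    (c : Fin I → Fin J → ℚ) (hc : ∀ i j, c i j = (g i j : ℚ) / (h i j : ℚ))
    (hsum1 : ∀ j, ∑ i, c i j = 1)
    (m : Fin J → ℕ) (hm : ∀ j, m j = Finset.univ.lcm (fun i => h i j))
    (FAB : (Fin J → ℕ) → Set (Fin I → Fin J → Fin K → ℕ))
    (hFAB : ∀ x, FAB x = {t | ∀ i j, ((∑ k, t i j k : ℕ) : ℚ) = (m j : ℚ) * (x j : ℚ) * c i j})
    (Sol : Set (Fin J → ℕ))
    (hSol : Sol = {x | (∀ j, 0 < x j) ∧ ∑ j, m j * x j = N}) :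
    {t : Fin I → Fin J → Fin K → ℕ |
        (∑ i, ∑ j, ∑ k, t i j k) = N ∧
        (∀ j, 0 < ∑ i, ∑ k, t i j k) ∧
        (∀ i j, ((∑ k, t i j k : ℕ) : ℚ) = c i j * ((∑ i', ∑ k, t i' j k : ℕ) : ℚ))}
      = (⋃ x ∈ Sol, FAB x) ∧
    (∀ x ∈ Sol, ∀ x' ∈ Sol, x ≠ x' → Disjoint (FAB x) (FAB x')) :=
  stmt_9_general I J K N g h hcop hpos c hc hsum1 m hm FAB hFAB Sol hSol
end

section
/- The fiber F_{A|B} (tables with total N, positive B-margins, and given conditional frequencies c_{ij}) equals the fiber F_{AB} (tables with the fixed margin s_{ij} = m_j x_j c_{ij}) if and only if the Diophantine equation ∑_{j=1}^J m_j x_j = N has exactly one solution in positive integers. -/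
/-!
A table lies in either fiber according to its `A × B` marginal alone, and every marginal is
attained once `K > 0`, so it suffices to compare the two sets of admissible marginals. If the
column totals `n j` of a marginal `s` satisfy `s i j = c i j * n j` with `c i j = g i j / h i j`
in lowest terms, then every `h i j` divides `n j`, hence `n j = m j * x j`; so the admissible
marginals of `F_{A|B}` are exactly the cells `m j * x j * c i j` for the positive solutions `x`
of `∑ j, m j * x j = N`, and different solutions give different marginals.
-/

open Finset

variable {ι κ τ : Type*}

def marginalAB [Fintype τ] (t : ι → κ → τ → ℕ) (i : ι) (j : κ) : ℕ := ∑ k, t i j k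

theorem marginalAB_surjective [Fintype τ] [Nonempty τ] :
    Function.Surjective (marginalAB : (ι → κ → τ → ℕ) → ι → κ → ℕ) := by
  classical
  obtain ⟨k₀⟩ := ‹Nonempty τ›
  exact fun s => ⟨fun i j => Pi.single k₀ (s i j), by ext i j; simp [marginalAB]⟩

/-- The `A × B` marginals of the tables in `F_{A|B}`. -/
def condMarginals [Fintype ι] [Fintype κ] (c : ι → κ → ℚ) (N : ℕ) : Set (ι → κ → ℕ) :=
  {s | ∑ i, ∑ j, s i j = N ∧ (∀ j, 0 < ∑ i, s i j) ∧
    ∀ i j, (s i j : ℚ) = c i j * (∑ i', s i' j : ℕ)}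

def posSolutions [Fintype κ] (m : κ → ℕ) (N : ℕ) : Set (κ → ℕ) :=
  {x | (∀ j, 0 < x j) ∧ ∑ j, m j * x j = N}

/-- The marginal with cells `m j * x j * (g i j / h i j)`, integral when `h i j ∣ m j`. -/
def scaledCells (g h : ι → κ → ℕ) (m x : κ → ℕ) (i : ι) (j : κ) : ℕ :=
  x j * (m j / h i j) * g i j

theorem Nat.Coprime.dvd_of_natCast_eq_div_mul {a g h n : ℕ} (hgh : g.Coprime h) (hh : h ≠ 0)
    (e : (a : ℚ) = g / h * n) : h ∣ n := by
  have e' : h * a = g * n := by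
    have : (h : ℚ) ≠ 0 := by exact_mod_cast hh
    rw [div_mul_eq_mul_div, eq_div_iff this] at e
    exact_mod_cast (mul_comm _ _).trans e
  exact hgh.symm.dvd_of_dvd_mul_left (Dvd.intro a e')

theorem natCast_mul_div_mul {g h m x : ℕ} (hdvd : h ∣ m) :
    ((x * (m / h) * g : ℕ) : ℚ) = m * x * (g / h) := by
  obtain ⟨q, rfl⟩ := hdvd
  rcases Nat.eq_zero_or_pos h with rfl | hh
  · simp
  · rw [Nat.mul_div_cancel_left q hh]
    push_cast
    field_simp

section scaledCells

variable {g h : ι → κ → ℕ} {c : ι → κ → ℚ} {m : κ → ℕ}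

theorem natCast_scaledCells (hc : ∀ i j, c i j = g i j / h i j) (hdvd : ∀ i j, h i j ∣ m j)
    (x : κ → ℕ) (i : ι) (j : κ) : (scaledCells g h m x i j : ℚ) = m j * x j * c i j := by
  rw [hc]
  exact natCast_mul_div_mul (hdvd i j)

theorem setOf_natCast_eq_mul_eq_singleton (hc : ∀ i j, c i j = g i j / h i j) (hdvd : ∀ i j, h i j ∣ m j)
    (x : κ → ℕ) :
    {s : ι → κ → ℕ | ∀ i j, (s i j : ℚ) = m j * x j * c i j} = {scaledCells g h m x} := by
  ext s
  simp only [Set.mem_ofPred_eq, Set.mem_singleton_iff, ← natCast_scaledCells hc hdvd,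
    Nat.cast_inj, funext_iff]

variable [Fintype ι]

theorem sum_scaledCells (hc : ∀ i j, c i j = g i j / h i j) (hdvd : ∀ i j, h i j ∣ m j)
    (hsum : ∀ j, ∑ i, c i j = 1) (x : κ → ℕ) (j : κ) :
    ∑ i, scaledCells g h m x i j = m j * x j := by
  have : ((∑ i, scaledCells g h m x i j : ℕ) : ℚ) = m j * x j := by
    simp only [Nat.cast_sum, natCast_scaledCells hc hdvd, ← Finset.mul_sum, hsum, mul_one]
  exact_mod_cast this

theorem scaledCells_injective (hc : ∀ i j, c i j = g i j / h i j) (hdvd : ∀ i j, h i j ∣ m j)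
    (hsum : ∀ j, ∑ i, c i j = 1) (hm : ∀ j, m j ≠ 0) :
    Function.Injective (scaledCells g h m) := by
  intro x y hxy
  funext j
  have := sum_scaledCells hc hdvd hsum x j
  rw [hxy, sum_scaledCells hc hdvd hsum y j] at this
  exact (mul_left_cancel₀ (hm j) this).symm

theorem condMarginals_eq_image [Fintype κ] (hc : ∀ i j, c i j = g i j / h i j)
    (hcop : ∀ i j, (g i j).Coprime (h i j)) (hpos : ∀ i j, 0 < h i j)
    (hsum : ∀ j, ∑ i, c i j = 1) (hm : ∀ j, m j = univ.lcm fun i => h i j) (N : ℕ) :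
    condMarginals c N = scaledCells g h m '' posSolutions m N := by
  have hdvd : ∀ i j, h i j ∣ m j := fun i j => hm j ▸ dvd_lcm (mem_univ i)
  ext s
  constructor
  · rintro ⟨htotal, hcol, hcells⟩
    set n : κ → ℕ := fun j => ∑ i, s i j
    have hmn : ∀ j, m j ∣ n j := fun j => hm j ▸ Finset.lcm_dvd fun i _ =>
      (hcop i j).dvd_of_natCast_eq_div_mul (hpos i j).ne' ((hcells i j).trans (by rw [hc]))
    have hnx : ∀ j, m j * (n j / m j) = n j := fun j => Nat.mul_div_cancel' (hmn j)
    refine ⟨fun j => n j / m j, ⟨fun j => ?_, ?_⟩, ?_⟩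
    · exact pos_of_mul_pos_right ((hnx j).symm ▸ hcol j : 0 < m j * (n j / m j)) (Nat.zero_le _)
    · simp only [hnx, n]
      rw [Finset.sum_comm, htotal]
    · ext i j
      have : (scaledCells g h m (fun j => n j / m j) i j : ℚ) = s i j := by
        rw [natCast_scaledCells hc hdvd, hcells, ← Nat.cast_mul, hnx, mul_comm]
      exact_mod_cast this
  · rintro ⟨x, ⟨hxpos, hxsum⟩, rfl⟩
    have hm0 : ∀ j, 0 < m j := fun j => Nat.pos_of_ne_zero <| hm j ▸
      lcm_ne_zero_iff.mpr fun i _ => (hpos i j).ne'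
    refine ⟨?_, fun j => ?_, fun i j => ?_⟩
    · rw [Finset.sum_comm]
      simp only [sum_scaledCells hc hdvd hsum, hxsum]
    · rw [sum_scaledCells hc hdvd hsum]
      exact Nat.mul_pos (hm0 j) (hxpos j)
    · rw [sum_scaledCells hc hdvd hsum, natCast_scaledCells hc hdvd]
      push_cast
      ring

end scaledCells

theorem stmt_10_general (I J K N : ℕ) (hK : 0 < K)
    (g h : Fin I → Fin J → ℕ)
    (hcop : ∀ i j, Nat.Coprime (g i j) (h i j))
    (hpos : ∀ i j, 0 < h i j)
    (c : Fin I → Fin J → ℚ) (hc : ∀ i j, c i j = (g i j : ℚ) / (h i j : ℚ))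
    (hsum1 : ∀ j, ∑ i, c i j = 1)
    (m : Fin J → ℕ) (hm : ∀ j, m j = Finset.univ.lcm (fun i => h i j))
    (x₀ : Fin J → ℕ) :
    ({t : Fin I → Fin J → Fin K → ℕ |
        (∑ i, ∑ j, ∑ k, t i j k) = N ∧
        (∀ j, 0 < ∑ i, ∑ k, t i j k) ∧
        (∀ i j, ((∑ k, t i j k : ℕ) : ℚ) = c i j * ((∑ i', ∑ k, t i' j k : ℕ) : ℚ))}
      = {t : Fin I → Fin J → Fin K → ℕ |
          ∀ i j, ((∑ k, t i j k : ℕ) : ℚ) = (m j : ℚ) * (x₀ j : ℚ) * c i j})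
    ↔ {x : Fin J → ℕ | (∀ j, 0 < x j) ∧ ∑ j, m j * x j = N} = {x₀} := by
  have : Nonempty (Fin K) := ⟨⟨0, hK⟩⟩
  have hdvd : ∀ i j, h i j ∣ m j := fun i j => hm j ▸ dvd_lcm (mem_univ i)
  change marginalAB ⁻¹' condMarginals c N
      = marginalAB ⁻¹' {s | ∀ i j, (s i j : ℚ) = m j * x₀ j * c i j} ↔ posSolutions m N = {x₀}
  rw [(Set.preimage_injective.mpr marginalAB_surjective).eq_iff,
    condMarginals_eq_image hc hcop hpos hsum1 hm, setOf_natCast_eq_mul_eq_singleton hc hdvd,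
    ← Set.image_singleton, (Set.image_injective.mpr (scaledCells_injective hc hdvd hsum1 ?_)).eq_iff]
  exact fun j => hm j ▸ lcm_ne_zero_iff.mpr fun i _ => (hpos i j).ne'

theorem stmt_10 (I J K N : ℕ) (hI : 0 < I) (hJ : 0 < J) (hK : 0 < K) (hN : 0 < N)
    (g h : Fin I → Fin J → ℕ)
    (hcop : ∀ i j, Nat.Coprime (g i j) (h i j))
    (hpos : ∀ i j, 0 < h i j)
    (c : Fin I → Fin J → ℚ) (hc : ∀ i j, c i j = (g i j : ℚ) / (h i j : ℚ))
    (hsum1 : ∀ j, ∑ i, c i j = 1)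
    (m : Fin J → ℕ) (hm : ∀ j, m j = Finset.univ.lcm (fun i => h i j))
    (x₀ : Fin J → ℕ) (hx₀pos : ∀ j, 0 < x₀ j) (hx₀ : ∑ j, m j * x₀ j = N) :
    ({t : Fin I → Fin J → Fin K → ℕ |
        (∑ i, ∑ j, ∑ k, t i j k) = N ∧
        (∀ j, 0 < ∑ i, ∑ k, t i j k) ∧
        (∀ i j, ((∑ k, t i j k : ℕ) : ℚ) = c i j * ((∑ i', ∑ k, t i' j k : ℕ) : ℚ))}
      = {t : Fin I → Fin J → Fin K → ℕ |
          ∀ i j, ((∑ k, t i j k : ℕ) : ℚ) = (m j : ℚ) * (x₀ j : ℚ) * c i j})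
    ↔ {x : Fin J → ℕ | (∀ j, 0 < x j) ∧ ∑ j, m j * x j = N} = {x₀} :=
  stmt_10_general I J K N hK g h hcop hpos c hc hsum1 m hm x₀
end

section
/- Let m_1, …, m_J be positive integers. The number of positive integer solutions of ∑_j m_j x_j = N is at most N^{J−1}·gcd(m_1,…,m_J)/((J−1)!·∏_j m_j) · (1 + C/N)^{J−1} for some constant C depending only on m_1, …, m_J; in particular, the number of positive integer solutions is O(N^{J−1}) as N → ∞. -/
/-!
Split off the first coordinate `x₀ = k`. The remaining coordinates solve the shorter equation
with right-hand side `N - m₀ k`, which has solutions only if `g' = gcd(m₁, …)` divides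
`N - m₀ k`. These `k` form one residue class modulo `d = g' / gcd(m)` (cancel `m₀` in the
congruence `m₀ k ≡ N [MOD g']`), so `k ↦ k / d` is injective on them and
`m₀ d (k / d) ≤ m₀ k`. By induction, the contributions are bounded by
`(N + C - m₀ d i)^(J-2) · g' / ((J-2)! ∏ mᵢ)` for distinct `i`. Comparing with the
telescoping sum of `(N + C + m₀ d - m₀ d i)^(J-1)` gives an extra factor `1 / ((J-1) m₀ d)`,
and `g' / d = gcd(m)`.
-/

open Finset
open scoped Nat

theorem nat_mul_pow_mul_sub_le_pow_sub_pow {R : Type*} [CommRing R] [PartialOrder R]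
    [IsOrderedRing R] {a b : R} (n : ℕ) (hb : 0 ≤ b) (hab : b ≤ a) :
    n * b ^ (n - 1) * (a - b) ≤ a ^ n - b ^ n := by
  rw [← geom_sum₂_self, ← geom_sum₂_mul]
  refine mul_le_mul_of_nonneg_right (sum_le_sum fun i _ => ?_) (sub_nonneg.2 hab)
  gcongr

theorem sum_pow_sub_mul_le {R : Type*} [CommRing R] [LinearOrder R] [IsStrictOrderedRing R]
    {B L : R} {t : Finset ℕ} (j n : ℕ) (ht : t ⊆ range n) (hL : 0 ≤ L) (hn : L * n ≤ B + L) :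
    ((j : R) + 1) * L * ∑ i ∈ t, (B - L * i) ^ j ≤ (B + L) ^ (j + 1) := by
  have hLi : ∀ i < n, L * i ≤ B := fun i hi => by
    have : L * (i + 1 : ℕ) ≤ L * n := mul_le_mul_of_nonneg_left (by exact_mod_cast hi) hL
    push_cast at this
    linarith
  set f : ℕ → R := fun i => (B + L - L * i) ^ (j + 1)
  have hterm : ∀ i < n, ((j : R) + 1) * L * (B - L * i) ^ j ≤ f i - f (i + 1) := fun i hi => by
    have := nat_mul_pow_mul_sub_le_pow_sub_pow (j + 1) (sub_nonneg.2 (hLi i hi))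
      (show B - L * i ≤ B + L - L * i by linarith)
    simp only [f]
    push_cast at this ⊢
    rw [show B + L - L * (i + 1) = B - L * i by ring]
    linarith
  calc ((j : R) + 1) * L * ∑ i ∈ t, (B - L * i) ^ j
      ≤ ((j : R) + 1) * L * ∑ i ∈ range n, (B - L * i) ^ j := by
        refine mul_le_mul_of_nonneg_left (sum_le_sum_of_subset_of_nonneg ht fun i hi _ => ?_)
          (mul_nonneg (by positivity) hL)
        exact pow_nonneg (sub_nonneg.2 (hLi i (mem_range.1 hi))) _
    _ ≤ ∑ i ∈ range n, (f i - f (i + 1)) := by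
        rw [mul_sum]
        exact sum_le_sum fun i hi => hterm i (mem_range.1 hi)
    _ = f 0 - f n := sum_range_sub' f n
    _ ≤ (B + L) ^ (j + 1) := by
        have : 0 ≤ f n := pow_nonneg (by linarith) _
        simp only [f, Nat.cast_zero, mul_zero, sub_zero]
        linarith

theorem Finset.gcd_univ_fin_succ {α : Type*} [CommMonoidWithZero α] [NormalizedGCDMonoid α]
    {n : ℕ} (f : Fin (n + 1) → α) : univ.gcd f = GCDMonoid.gcd (f 0) (univ.gcd (Fin.tail f)) := by
  rw [Fin.univ_succ, gcd_cons, map_eq_image, gcd_image]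
  rfl

theorem Nat.injOn_div_of_modEq {s : Set ℕ} {d : ℕ} (h : ∀ a ∈ s, ∀ b ∈ s, a ≡ b [MOD d]) :
    Set.InjOn (· / d) s := fun a ha b hb hab => by
  rw [← Nat.div_add_mod a d, ← Nat.div_add_mod b d, show a / d = b / d from hab, h a ha b hb]

theorem Nat.modEq_div_gcd_of_dvd_sub_mul {g c N a b : ℕ} (hg : 0 < g) (ha : c * a ≤ N)
    (hb : c * b ≤ N) (hga : g ∣ N - c * a) (hgb : g ∣ N - c * b) : a ≡ b [MOD g / g.gcd c] :=
  Nat.ModEq.cancel_left_div_gcd hg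
    (((Nat.modEq_iff_dvd' ha).2 hga).trans ((Nat.modEq_iff_dvd' hb).2 hgb).symm)

theorem sum_pow_sub_mul_div_le {R : Type*} [CommRing R] [LinearOrder R] [IsStrictOrderedRing R]
    {s : Finset ℕ} {d L N : ℕ} {B : R} (j : ℕ) (hL : 0 < L)
    (hmod : ∀ a ∈ s, ∀ b ∈ s, a ≡ b [MOD d]) (hs : ∀ k ∈ s, L * (k / d) ≤ N) (hB : (N : R) ≤ B) :
    ((j : R) + 1) * L * ∑ k ∈ s, (B - L * (k / d : ℕ)) ^ j ≤ (B + L) ^ (j + 1) := by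
  have himage : s.image (· / d) ⊆ range (N / L + 1) := fun i hi => by
    obtain ⟨k, hk, rfl⟩ := mem_image.1 hi
    exact mem_range.2 (Nat.lt_succ_of_le ((Nat.le_div_iff_mul_le hL).2 (by linarith [hs k hk])))
  have hn : (L : R) * (N / L + 1 : ℕ) ≤ B + L := by
    have : ((L * (N / L) : ℕ) : R) ≤ N := by exact_mod_cast Nat.mul_div_le N L
    push_cast at this ⊢
    linarith
  rw [← sum_image (f := fun i : ℕ => (B - L * (i : R)) ^ j) (Nat.injOn_div_of_modEq hmod)]
  exact sum_pow_sub_mul_le j (N / L + 1) himage (by positivity) hn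

def posSols {J : ℕ} (m : Fin J → ℕ) (N : ℕ) : Finset (Fin J → ℕ) :=
  (Icc 1 fun _ => N).filter fun x => ∑ j, m j * x j = N

section PosSols

variable {J N : ℕ} {m : Fin J → ℕ}

theorem mem_posSols (hm : ∀ j, 0 < m j) {x : Fin J → ℕ} :
    x ∈ posSols m N ↔ (∀ j, 0 < x j) ∧ ∑ j, m j * x j = N := by
  simp only [posSols, mem_filter, mem_Icc, Pi.le_def, Pi.one_apply, Nat.one_le_iff_ne_zero,
    Nat.pos_iff_ne_zero]
  refine ⟨fun h => ⟨h.1.1, h.2⟩, fun h => ⟨⟨h.1, fun j => ?_⟩, h.2⟩⟩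
  calc x j ≤ m j * x j := Nat.le_mul_of_pos_left _ (hm j)
    _ ≤ ∑ i, m i * x i := single_le_sum (fun i _ => Nat.zero_le (m i * x i)) (mem_univ j)
    _ = N := h.2

theorem natCard_eq_card_posSols (hm : ∀ j, 0 < m j) :
    Nat.card {x : Fin J → ℕ // (∀ j, 0 < x j) ∧ ∑ j, m j * x j = N} = #(posSols m N) := by
  rw [← Nat.card_eq_finsetCard]
  exact Nat.card_congr (Equiv.subtypeEquivRight fun x => (mem_posSols hm).symm)

theorem gcd_dvd_of_mem_posSols {x : Fin J → ℕ} (hx : x ∈ posSols m N) : univ.gcd m ∣ N := by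
  rw [← (mem_filter.1 hx).2]
  exact dvd_sum fun j _ => (gcd_dvd (mem_univ j)).mul_right _

theorem card_posSols_fin_one_le (m : Fin 1 → ℕ) (hm : 0 < m 0) : #(posSols m N) ≤ 1 := by
  refine card_le_one.2 fun x hx y hy => funext fun i => ?_
  have hxy : m 0 * x 0 = m 0 * y 0 := by
    simpa using (mem_filter.1 hx).2.trans (mem_filter.1 hy).2.symm
  rw [Subsingleton.elim i 0]
  exact Nat.eq_of_mul_eq_mul_left hm hxy

theorem card_posSols_le_sum_tail (m : Fin (J + 1) → ℕ) (hm : ∀ j, 0 < m j) :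
    #(posSols m N) ≤ ∑ k ∈ (range (N / m 0 + 1)).filter (univ.gcd (Fin.tail m) ∣ N - m 0 * ·),
      #(posSols (Fin.tail m) (N - m 0 * k)) := by
  rw [← card_sigma]
  refine card_le_card_of_injOn (fun x => ⟨x 0, Fin.tail x⟩) (fun x hx => ?_) fun x _ y _ hxy => ?_
  · obtain ⟨hpos, hsum⟩ := (mem_posSols hm).1 hx
    rw [Fin.sum_univ_succ] at hsum
    have htail : Fin.tail x ∈ posSols (Fin.tail m) (N - m 0 * x 0) :=
      (mem_posSols fun i => hm i.succ).2 ⟨fun i => hpos i.succ, by simp only [Fin.tail]; omega⟩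
    have hx0 : x 0 ≤ N / m 0 := (Nat.le_div_iff_mul_le (hm 0)).2 (by rw [mul_comm]; omega)
    exact mem_sigma.2 ⟨mem_filter.2 ⟨mem_range.2 (Nat.lt_succ_of_le hx0),
      gcd_dvd_of_mem_posSols htail⟩, htail⟩
  · rw [Sigma.mk.injEq] at hxy
    rw [← Fin.cons_self_tail x, ← Fin.cons_self_tail y, hxy.1, eq_of_heq hxy.2]

end PosSols

def PosSolsBound {J : ℕ} (m : Fin (J + 1) → ℕ) (C : ℝ) : Prop :=
  ∀ N : ℕ, (#(posSols m N) : ℝ) ≤ (N + C) ^ J * univ.gcd m / (J ! * ∏ i, (m i : ℝ))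

theorem PosSolsBound.card_le {j : ℕ} {m : Fin (j + 1) → ℕ} {C : ℝ} (h : PosSolsBound m C)
    (hC : 0 ≤ C) {M : ℕ} {B : ℝ} (hM : M + C ≤ B) :
    (#(posSols m M) : ℝ) ≤ B ^ j * (univ.gcd m / (j ! * ∏ i, (m i : ℝ))) :=
  calc (#(posSols m M) : ℝ) ≤ (M + C) ^ j * (univ.gcd m / (j ! * ∏ i, (m i : ℝ))) :=
        (h M).trans_eq (mul_div_assoc _ _ _)
    _ ≤ B ^ j * (univ.gcd m / (j ! * ∏ i, (m i : ℝ))) := by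
        gcongr

theorem posSolsBound_of_tail {j : ℕ} (m : Fin (j + 2) → ℕ) (hm : ∀ i, 0 < m i) {C : ℝ}
    (hC : 0 ≤ C) (h : PosSolsBound (Fin.tail m) C) :
    PosSolsBound m (C + m 0 * (univ.gcd (Fin.tail m) / univ.gcd m : ℕ)) := by
  intro N
  have hg := Finset.gcd_univ_fin_succ m
  set g' := univ.gcd (Fin.tail m)
  set g := univ.gcd m
  set c := m 0
  rw [gcd_eq_nat_gcd, Nat.gcd_comm] at hg
  have hg' : 0 < g' := Nat.pos_of_ne_zero fun h0 => (hm 1).ne' (gcd_eq_zero_iff.1 h0 0 (mem_univ _))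
  have hd : 0 < g' / g := hg ▸ Nat.div_gcd_pos_of_pos_left c hg'
  set A := (range (N / c + 1)).filter (g' ∣ N - c * ·)
  have hcA : ∀ k ∈ A, c * k ≤ N := fun k hk => (Nat.mul_le_mul_left c
    (Nat.le_of_lt_succ (mem_range.1 (mem_filter.1 hk).1))).trans (Nat.mul_div_le N c)
  have hmod : ∀ a ∈ A, ∀ b ∈ A, a ≡ b [MOD g' / g] := fun a ha b hb => hg ▸
    Nat.modEq_div_gcd_of_dvd_sub_mul hg' (hcA a ha) (hcA b hb) (mem_filter.1 ha).2
      (mem_filter.1 hb).2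
  set d := g' / g
  set L := c * d
  have hL : (0 : ℝ) < L := by exact_mod_cast Nat.mul_pos (hm 0) hd
  have hLA : ∀ k, L * (k / d) ≤ c * k := fun k => by
    rw [mul_assoc]; exact Nat.mul_le_mul_left _ (Nat.mul_div_le k d)
  set κ : ℝ := g' / (j ! * ∏ i, (Fin.tail m i : ℝ))
  have hterm : ∀ k ∈ A, (#(posSols (Fin.tail m) (N - c * k)) : ℝ) ≤
      (N + C - L * (k / d : ℕ)) ^ j * κ := fun k hk => h.card_le hC <| by
    have : ((N - c * k : ℕ) : ℝ) + L * (k / d : ℕ) ≤ N := by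
      exact_mod_cast (show N - c * k + L * (k / d) ≤ N by have := hcA k hk; have := hLA k; omega)
    linarith
  have hsum := sum_pow_sub_mul_div_le (B := (N + C : ℝ)) j (Nat.mul_pos (hm 0) hd) hmod
    (fun k hk => (hLA k).trans (hcA k hk)) (by linarith)
  calc (#(posSols m N) : ℝ)
      ≤ ∑ k ∈ A, (#(posSols (Fin.tail m) (N - c * k)) : ℝ) := by
        exact_mod_cast card_posSols_le_sum_tail m hm
    _ ≤ (∑ k ∈ A, (N + C - L * (k / d : ℕ)) ^ j) * κ :=
        (sum_le_sum hterm).trans_eq (sum_mul ..).symm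
    _ ≤ (N + C + L) ^ (j + 1) / ((j + 1) * L) * κ := by
        gcongr
        rw [le_div_iff₀ (by positivity), mul_comm]
        exact hsum
    _ = _ := by
        have hgd : g * d = g' := Nat.mul_div_cancel' (hg ▸ Nat.gcd_dvd_left _ _)
        rw [Fin.prod_univ_succ]
        simp only [κ, ← hgd, L, c, Fin.tail, Nat.factorial_succ]
        push_cast
        field_simp
        ring

theorem posSolsBound_fin_one (m : Fin 1 → ℕ) (hm : 0 < m 0) : PosSolsBound m 0 := fun N => by
  have hm' : (m 0 : ℝ) ≠ 0 := by positivity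
  simpa [Finset.univ_unique, hm'] using card_posSols_fin_one_le m hm (N := N)

theorem exists_posSolsBound :
    ∀ {j : ℕ} (m : Fin (j + 1) → ℕ), (∀ i, 0 < m i) → ∃ C, 0 ≤ C ∧ PosSolsBound m C
  | 0, m, hm => ⟨0, le_rfl, posSolsBound_fin_one m (hm 0)⟩
  | _ + 1, m, hm => by
    obtain ⟨C, hC, h⟩ := exists_posSolsBound (Fin.tail m) fun i => hm i.succ
    exact ⟨_, by positivity, posSolsBound_of_tail m hm hC h⟩

theorem stmt_14 (J : ℕ) (hJ : 0 < J) (m : Fin J → ℕ) (hm : ∀ j, 0 < m j) :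
    ∃ C : ℝ, 0 ≤ C ∧ ∀ N : ℕ, 0 < N →
      (Nat.card {x : Fin J → ℕ // (∀ j, 0 < x j) ∧ ∑ j, m j * x j = N} : ℝ) ≤
        (N : ℝ) ^ (J - 1) * ((Finset.univ.gcd m : ℕ) : ℝ) /
          ((Nat.factorial (J - 1) : ℝ) * ∏ j, (m j : ℝ)) * (1 + C / N) ^ (J - 1) := by
  obtain ⟨j, rfl⟩ : ∃ j, J = j + 1 := ⟨J - 1, by omega⟩
  obtain ⟨C, hC, h⟩ := exists_posSolsBound m hm
  refine ⟨C, hC, fun N hN => ?_⟩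
  rw [natCard_eq_card_posSols hm, Nat.add_sub_cancel]
  have hNC : (N + C : ℝ) = N * (1 + C / N) := by field_simp
  refine (h N).trans_eq ?_
  rw [hNC, mul_pow]
  ring
end

section
/- Let a, b, N be positive integers with gcd(a,b) = 1. The number of nonnegative integer solutions (x, y) of a·x + b·y = N is either ⌊N/(ab)⌋ or ⌊N/(ab)⌋ + 1. -/
/-!
Proof idea: the solutions of `a x + b y = N + a b` are the shifts `(x + b, y)` of the solutions
for `N`, together with exactly one solution having `x < b` (as `a` is invertible modulo `b`, the
residue of `x` modulo `b` is forced). Hence the count grows by one when `N` grows by `a b`, and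
for `N < a b` there is at most one solution, so the count is `⌊N / (a b)⌋` plus `0` or `1`.
-/

def reps (a b N : ℕ) : Set (ℕ × ℕ) := {p | a * p.1 + b * p.2 = N}

namespace reps

variable {a b N : ℕ}

@[simp]
lemma mem_iff {p : ℕ × ℕ} : p ∈ reps a b N ↔ a * p.1 + b * p.2 = N := Iff.rfl

lemma finite (ha : 0 < a) (hb : 0 < b) : (reps a b N).Finite := by
  refine ((Set.finite_Iic N).prod (Set.finite_Iic N)).subset fun p hp => ?_
  rw [mem_iff] at hp
  have hx : p.1 ≤ a * p.1 := Nat.le_mul_of_pos_left _ ha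
  have hy : p.2 ≤ b * p.2 := Nat.le_mul_of_pos_left _ hb
  exact ⟨by simp only [Set.mem_Iic]; omega, by simp only [Set.mem_Iic]; omega⟩

lemma fst_modEq (hcop : Nat.Coprime a b) {p q : ℕ × ℕ} (hp : p ∈ reps a b N)
    (hq : q ∈ reps a b N) : p.1 ≡ q.1 [MOD b] := by
  rw [mem_iff] at hp hq
  have h : a * p.1 ≡ a * q.1 [MOD b] := by
    calc a * p.1 ≡ a * p.1 + b * p.2 [MOD b] := (Nat.add_mul_mod_self_left _ _ _).symm
      _ = a * q.1 + b * q.2 := by rw [hp, hq]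
      _ ≡ a * q.1 [MOD b] := Nat.add_mul_mod_self_left _ _ _
  exact Nat.ModEq.cancel_left_of_coprime (Nat.coprime_comm.mp hcop) h

lemma eq_of_fst_lt (hb : 0 < b) (hcop : Nat.Coprime a b) {p q : ℕ × ℕ}
    (hp : p ∈ reps a b N) (hq : q ∈ reps a b N) (hpb : p.1 < b) (hqb : q.1 < b) : p = q := by
  have h1 : p.1 = q.1 := by
    simpa only [Nat.ModEq, Nat.mod_eq_of_lt hpb, Nat.mod_eq_of_lt hqb] using fst_modEq hcop hp hq
  rw [mem_iff, h1] at hp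
  rw [mem_iff] at hq
  have h2 : p.2 = q.2 := Nat.eq_of_mul_eq_mul_left hb (by omega)
  exact Prod.ext h1 h2

lemma exists_mem_add_mul_fst_lt (hb : 0 < b) (hcop : Nat.Coprime a b) :
    ∃ p ∈ reps a b (N + a * b), p.1 < b := by
  obtain ⟨x, hxb, hx⟩ := Nat.exists_mul_mod_eq_of_coprime N hcop hb.ne'
  have hle : a * x ≤ N + a * b := by
    have := Nat.mul_le_mul_left a hxb.le
    omega
  have hdvd : b ∣ N + a * b - a * x := by
    refine (Nat.modEq_iff_dvd' hle).mp ?_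
    calc a * x ≡ N [MOD b] := hx
      _ ≡ N + a * b [MOD b] := (Nat.add_mul_mod_self_right _ _ _).symm
  obtain ⟨y, hy⟩ := hdvd
  exact ⟨(x, y), show a * x + b * y = N + a * b by omega, hxb⟩

lemma add_mul_eq_insert_image (hb : 0 < b) (hcop : Nat.Coprime a b) {p₀ : ℕ × ℕ}
    (hp₀ : p₀ ∈ reps a b (N + a * b)) (hp₀b : p₀.1 < b) :
    reps a b (N + a * b) = insert p₀ ((fun p => (p.1 + b, p.2)) '' reps a b N) := by
  ext ⟨x, y⟩
  simp only [Set.mem_insert_iff, Set.mem_image, mem_iff, Prod.mk.injEq, Prod.exists]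
  constructor
  · intro h
    rcases lt_or_ge x b with hxb | hbx
    · exact Or.inl (eq_of_fst_lt hb hcop (by simpa using h) hp₀ hxb hp₀b)
    · obtain ⟨x', rfl⟩ := Nat.exists_eq_add_of_le' hbx
      refine Or.inr ⟨x', y, ?_, rfl, rfl⟩
      rw [Nat.mul_add] at h
      omega
  · rintro (rfl | ⟨x', y', h, rfl, rfl⟩)
    · simpa using hp₀
    · rw [Nat.mul_add]
      omega

lemma ncard_add_mul (ha : 0 < a) (hb : 0 < b) (hcop : Nat.Coprime a b) :
    (reps a b (N + a * b)).ncard = (reps a b N).ncard + 1 := by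
  obtain ⟨p₀, hp₀, hp₀b⟩ := exists_mem_add_mul_fst_lt (N := N) hb hcop
  have hshift : (fun p : ℕ × ℕ => (p.1 + b, p.2)).Injective := fun p q h => by
    simp only [Prod.mk.injEq, Nat.add_right_cancel_iff] at h
    exact Prod.ext h.1 h.2
  have hnotMem : p₀ ∉ (fun p : ℕ × ℕ => (p.1 + b, p.2)) '' reps a b N := by
    rintro ⟨p, -, rfl⟩
    exact (Nat.le_add_left b p.1).not_gt hp₀b
  rw [add_mul_eq_insert_image hb hcop hp₀ hp₀b,
    Set.ncard_insert_of_notMem hnotMem ((finite ha hb).image _),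
    Set.ncard_image_of_injective _ hshift]

lemma ncard_le_one_of_lt (ha : 0 < a) (hb : 0 < b) (hcop : Nat.Coprime a b) (hN : N < a * b) :
    (reps a b N).ncard ≤ 1 := by
  have fst_lt {p : ℕ × ℕ} (hp : p ∈ reps a b N) : p.1 < b := by
    rw [mem_iff] at hp
    exact Nat.lt_of_mul_lt_mul_left (a := a) (by omega)
  exact (Set.ncard_le_one (finite ha hb)).mpr fun p hp q hq =>
    eq_of_fst_lt hb hcop hp hq (fst_lt hp) (fst_lt hq)

lemma ncard_eq_div_add_ncard_mod (ha : 0 < a) (hb : 0 < b) (hcop : Nat.Coprime a b) :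
    (reps a b N).ncard = N / (a * b) + (reps a b (N % (a * b))).ncard := by
  have key (k r : ℕ) : (reps a b (r + a * b * k)).ncard = k + (reps a b r).ncard := by
    induction k with
    | zero => simp
    | succ k ih => rw [Nat.mul_succ, ← Nat.add_assoc, ncard_add_mul ha hb hcop, ih]; ring
  conv_lhs => rw [← Nat.mod_add_div N (a * b)]
  exact key _ _

end reps

theorem stmt_15_general (a b N : ℕ) (ha : 0 < a) (hb : 0 < b)
    (hcop : Nat.gcd a b = 1) :
    Nat.card {p : ℕ × ℕ // a * p.1 + b * p.2 = N} = N / (a * b) ∨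
    Nat.card {p : ℕ × ℕ // a * p.1 + b * p.2 = N} = N / (a * b) + 1 := by
  have hcard : Nat.card {p : ℕ × ℕ // a * p.1 + b * p.2 = N} = (reps a b N).ncard :=
    Nat.card_coe_set_eq _
  have hrem := reps.ncard_le_one_of_lt ha hb hcop (Nat.mod_lt N (Nat.mul_pos ha hb))
  rw [hcard, reps.ncard_eq_div_add_ncard_mod ha hb hcop]
  omega

theorem stmt_15 (a b N : ℕ) (ha : 0 < a) (hb : 0 < b) (hN : 0 < N)
    (hcop : Nat.gcd a b = 1) :
    Nat.card {p : ℕ × ℕ // a * p.1 + b * p.2 = N} = N / (a * b) ∨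
    Nat.card {p : ℕ × ℕ // a * p.1 + b * p.2 = N} = N / (a * b) + 1 :=
  stmt_15_general a b N ha hb hcop
end
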